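/- Let A = k[X]/(X²). Then the universal coacting bialgebra a(A) is isomorphic as an algebra to the free algebra k⟨x, y⟩ modulo the relations x² = 0 and xy + yx = 0, with bialgebra structure Δ(x) = x ⊗ y + 1 ⊗ x, Δ(y) = y ⊗ y, ε(x) = 0, ε(y) = 1. -/

import Mathlib

open TensorProduct

noncomputable section

variable (k : Type) [Field k]

/-- The relations defining the quantum symmetry semigroup `a(A)` of a finite dimensional
algebra `A` with basis `e` (with `e 0 = 1`), in terms of the structure constants
`τ i j s = e.repr (e i * e j) s`. -/
inductive ARel {A : Type} [Ring A] [Algebra k A] {n : ℕ} [NeZero n]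
    (e : Module.Basis (Fin n) k A) :
    FreeAlgebra k (Fin n × Fin n) → FreeAlgebra k (Fin n × Fin n) → Prop
  | mul (a i j : Fin n) :
      ARel e (∑ u, e.repr (e i * e j) u • FreeAlgebra.ι k (a, u))
        (∑ s, ∑ t, e.repr (e s * e t) a • (FreeAlgebra.ι k (s, i) * FreeAlgebra.ι k (t, j)))
  | unit (a : Fin n) :
      ARel e (FreeAlgebra.ι k (a, (0 : Fin n))) (if a = 0 then 1 else 0)

/-- The quantum symmetry semigroup `a(A)`. -/
abbrev aA {A : Type} [Ring A] [Algebra k A] {n : ℕ} [NeZero n] (e : Module.Basis (Fin n) k A) :=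
  RingQuot (ARel k e)

/-- The generators `x_{s i}` of `a(A)`. -/
def xg {A : Type} [Ring A] [Algebra k A] {n : ℕ} [NeZero n] (e : Module.Basis (Fin n) k A)
    (s i : Fin n) : aA k e :=
  RingQuot.mkAlgHom k (ARel k e) (FreeAlgebra.ι k (s, i))

/-- The canonical map `η_A : A → A ⊗ a(A)`, `e i ↦ ∑ s, e s ⊗ x_{s i}`, as a linear map. -/
def etaA {A : Type} [Ring A] [Algebra k A] {n : ℕ} [NeZero n] (e : Module.Basis (Fin n) k A) :
    A →ₗ[k] A ⊗[k] aA k e :=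
  (e.constr k) fun i => ∑ s, e s ⊗ₜ[k] xg k e s i


open Polynomial in
/-- The algebra `A = k[X]/(X²)`. -/
def A2 : Type := AdjoinRoot (X ^ 2 : k[X])

instance : CommRing (A2 k) := by unfold A2; infer_instance
instance : Algebra k (A2 k) := by unfold A2; infer_instance

open Polynomial in
def pb2 : PowerBasis k (A2 k) :=
  AdjoinRoot.powerBasis (by
    intro h
    simpa using congrArg Polynomial.natDegree h : (X ^ 2 : k[X]) ≠ 0)

open Polynomial in
/-- The basis `{1, x̄}` of `k[X]/(X²)`. -/
def e2 : Module.Basis (Fin 2) k (A2 k) :=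
  (pb2 k).basis.reindex (finCongr (by simp [pb2, AdjoinRoot.powerBasis]))

/-- The relations `x² = 0` and `xy + yx = 0` on the free algebra `k⟨x, y⟩`
(where `x = ι false`, `y = ι true`). -/
inductive BRel : FreeAlgebra k Bool → FreeAlgebra k Bool → Prop
  | sq : BRel (FreeAlgebra.ι k false * FreeAlgebra.ι k false) 0
  | anti : BRel
      (FreeAlgebra.ι k false * FreeAlgebra.ι k true +
        FreeAlgebra.ι k true * FreeAlgebra.ι k false) 0

/-- The algebra `k⟨x, y | x² = 0, xy + yx = 0⟩`. -/
abbrev Bxy : Type := RingQuot (BRel k)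

def Bx : Bxy k := RingQuot.mkAlgHom k (BRel k) (FreeAlgebra.ι k false)

def By : Bxy k := RingQuot.mkAlgHom k (BRel k) (FreeAlgebra.ι k true)

/- ### Auxiliary lemmas -/

open Polynomial in
lemma e2_apply (i : Fin 2) : e2 k i = (pb2 k).gen ^ (i : ℕ) := by
  simp [e2, Module.Basis.reindex_apply, PowerBasis.coe_basis]

lemma e2_zero : e2 k 0 = 1 := by simp [e2_apply]

open Polynomial in
lemma e2_one_sq : e2 k 1 * e2 k 1 = 0 := by
  have h : (pb2 k).gen = AdjoinRoot.root (X ^ 2 : k[X]) := by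
    simp [pb2, AdjoinRoot.powerBasis]
    rfl
  rw [e2_apply, h]
  show (AdjoinRoot.root (X ^ 2 : k[X])) ^ 1 * (AdjoinRoot.root (X ^ 2 : k[X])) ^ 1 = 0
  erw [pow_one, ← AdjoinRoot.mk_X]
  have h2 : (AdjoinRoot.mk (X ^ 2 : k[X])) X * (AdjoinRoot.mk (X ^ 2 : k[X])) X
      = (0 : AdjoinRoot (X ^ 2 : k[X])) := by
    rw [← map_mul, show (X * X : k[X]) = X ^ 2 from (sq X).symm, AdjoinRoot.mk_self]
  exact h2

lemma repr_e2 (i j : Fin 2) : (e2 k).repr (e2 k i) j = if i = j then 1 else 0 := by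
  rw [Module.Basis.repr_self, Finsupp.single_apply]

lemma repr_mul_e2 (i j u : Fin 2) :
    (e2 k).repr (e2 k i * e2 k j) u =
      if i = 0 then (if j = u then 1 else 0)
      else if j = 0 then (if i = u then 1 else 0)
      else 0 := by
  have h0 : ∀ j : Fin 2, e2 k 0 * e2 k j = e2 k j := fun j => by rw [e2_zero, one_mul]
  have h0' : ∀ i : Fin 2, e2 k i * e2 k 0 = e2 k i := fun i => by rw [e2_zero, mul_one]
  fin_cases i <;> fin_cases j <;>
    simp [h0, h0', e2_one_sq, repr_e2, Finsupp.single_apply]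

lemma Bx_sq : Bx k * Bx k = 0 := by
  simpa [Bx, map_mul] using RingQuot.mkAlgHom_rel k (BRel.sq (k := k))

lemma Bxy_anti : Bx k * By k + By k * Bx k = 0 := by
  simpa [Bx, By, map_mul, map_add] using RingQuot.mkAlgHom_rel k (BRel.anti (k := k))

lemma xg00 : xg k (e2 k) 0 0 = 1 := by
  simpa [xg, map_one] using RingQuot.mkAlgHom_rel k (ARel.unit (e := e2 k) 0)

lemma xg10 : xg k (e2 k) 1 0 = 0 := by
  simpa [xg, map_zero] using RingQuot.mkAlgHom_rel k (ARel.unit (e := e2 k) 1)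

lemma xg01_sq : xg k (e2 k) 0 1 * xg k (e2 k) 0 1 = 0 := by
  have := RingQuot.mkAlgHom_rel k (ARel.mul (e := e2 k) 0 1 1)
  simpa [Fin.sum_univ_two, map_add, map_smul, map_mul, repr_mul_e2, xg] using this.symm

lemma xg_anti : xg k (e2 k) 0 1 * xg k (e2 k) 1 1 + xg k (e2 k) 1 1 * xg k (e2 k) 0 1 = 0 := by
  have := RingQuot.mkAlgHom_rel k (ARel.mul (e := e2 k) 1 1 1)
  simpa [Fin.sum_univ_two, map_add, map_smul, map_mul, repr_mul_e2, xg] using this.symm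

/-- The values of the generators of `a(A)` in `Bxy`. -/
def gv : Fin 2 × Fin 2 → Bxy k := fun p =>
  if p.1 = 0 then (if p.2 = 0 then 1 else Bx k) else (if p.2 = 0 then 0 else By k)

def φaux : FreeAlgebra k (Fin 2 × Fin 2) →ₐ[k] Bxy k := FreeAlgebra.lift k (gv k)

lemma φaux_rel : ∀ ⦃x y⦄, ARel k (e2 k) x y → φaux k x = φaux k y := by
  intro x y h
  induction h with
  | mul a i j =>
    fin_cases a <;> fin_cases i <;> fin_cases j <;>
      simp [φaux, Fin.sum_univ_two, map_add, map_smul, map_mul, repr_mul_e2, gv,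
        Bx_sq, Bxy_anti]
  | unit a =>
    fin_cases a <;> simp [φaux, gv]

/-- The forward algebra map `a(A) → Bxy`. -/
def fMap : aA k (e2 k) →ₐ[k] Bxy k :=
  RingQuot.liftAlgHom k ⟨φaux k, φaux_rel k⟩

def ψaux : FreeAlgebra k Bool →ₐ[k] aA k (e2 k) :=
  FreeAlgebra.lift k (fun b => if b then xg k (e2 k) 1 1 else xg k (e2 k) 0 1)

lemma ψaux_rel : ∀ ⦃x y⦄, BRel k x y → ψaux k x = ψaux k y := by
  intro x y h
  induction h with
  | sq => simp [ψaux, map_mul, xg01_sq]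
  | anti => simp [ψaux, map_mul, map_add, xg_anti]

/-- The backward algebra map `Bxy → a(A)`. -/
def gMap : Bxy k →ₐ[k] aA k (e2 k) :=
  RingQuot.liftAlgHom k ⟨ψaux k, ψaux_rel k⟩

lemma fMap_xg (s i : Fin 2) : fMap k (xg k (e2 k) s i) = gv k (s, i) := by
  rw [xg, fMap, RingQuot.liftAlgHom_mkAlgHom_apply, φaux, FreeAlgebra.lift_ι_apply]

lemma gMap_Bx : gMap k (Bx k) = xg k (e2 k) 0 1 := by
  rw [Bx, gMap, RingQuot.liftAlgHom_mkAlgHom_apply, ψaux, FreeAlgebra.lift_ι_apply]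
  simp

lemma gMap_By : gMap k (By k) = xg k (e2 k) 1 1 := by
  rw [By, gMap, RingQuot.liftAlgHom_mkAlgHom_apply, ψaux, FreeAlgebra.lift_ι_apply]
  simp

/-- The algebra isomorphism `a(A) ≃ Bxy`. -/
def Fequiv : aA k (e2 k) ≃ₐ[k] Bxy k :=
  AlgEquiv.ofAlgHom (fMap k) (gMap k)
    (by
      refine RingQuot.ringQuot_ext' k _ _ (FreeAlgebra.hom_ext (funext fun b => ?_))
      cases b
      · simp only [Function.comp_apply, AlgHom.comp_apply, AlgHom.coe_id, id_eq]
        show fMap k (gMap k (Bx k)) = Bx k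
        rw [gMap_Bx, fMap_xg]; simp [gv]
      · simp only [Function.comp_apply, AlgHom.comp_apply, AlgHom.coe_id, id_eq]
        show fMap k (gMap k (By k)) = By k
        rw [gMap_By, fMap_xg]; simp [gv])
    (by
      refine RingQuot.ringQuot_ext' k _ _ (FreeAlgebra.hom_ext (funext fun p => ?_))
      obtain ⟨s, i⟩ := p
      simp only [Function.comp_apply, AlgHom.comp_apply, AlgHom.coe_id, id_eq]
      show gMap k (fMap k (xg k (e2 k) s i)) = xg k (e2 k) s i
      fin_cases s <;> fin_cases i <;>
        rw [fMap_xg] <;>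
        simp [gv, gMap_Bx, gMap_By, xg00, xg10, map_one, map_zero])

theorem aA_of_dual_numbers
    (Δ : aA k (e2 k) →ₐ[k] aA k (e2 k) ⊗[k] aA k (e2 k)) (ε : aA k (e2 k) →ₐ[k] k)
    (hΔ : ∀ i j, Δ (xg k (e2 k) i j) = ∑ s, xg k (e2 k) i s ⊗ₜ[k] xg k (e2 k) s j)
    (hε : ∀ i j, ε (xg k (e2 k) i j) = if i = j then 1 else 0) :
    ∃ F : aA k (e2 k) ≃ₐ[k] Bxy k,
      F (xg k (e2 k) 0 1) = Bx k ∧ F (xg k (e2 k) 1 1) = By k ∧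
      TensorProduct.map F.toLinearMap F.toLinearMap (Δ (xg k (e2 k) 0 1)) =
        Bx k ⊗ₜ[k] By k + 1 ⊗ₜ[k] Bx k ∧
      TensorProduct.map F.toLinearMap F.toLinearMap (Δ (xg k (e2 k) 1 1)) =
        By k ⊗ₜ[k] By k ∧
      ε (xg k (e2 k) 0 1) = 0 ∧ ε (xg k (e2 k) 1 1) = 1 := by
  refine ⟨Fequiv k, ?_, ?_, ?_, ?_, ?_, ?_⟩
  · show fMap k _ = _; rw [fMap_xg]; simp [gv]
  · show fMap k _ = _; rw [fMap_xg]; simp [gv]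
  · rw [hΔ 0 1]
    have h00 : (Fequiv k) (xg k (e2 k) 0 0) = 1 := by
      show fMap k _ = _; rw [fMap_xg]; simp [gv]
    have h01 : (Fequiv k) (xg k (e2 k) 0 1) = Bx k := by
      show fMap k _ = _; rw [fMap_xg]; simp [gv]
    have h11 : (Fequiv k) (xg k (e2 k) 1 1) = By k := by
      show fMap k _ = _; rw [fMap_xg]; simp [gv]
    simp only [Fin.sum_univ_two, map_add, TensorProduct.map_tmul,
      AlgEquiv.toLinearMap_apply, h00, h01, h11]
    rw [add_comm]
  · rw [hΔ 1 1]
    have h10 : (Fequiv k) (xg k (e2 k) 1 0) = 0 := by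
      show fMap k _ = _; rw [fMap_xg]; simp [gv]
    have h01 : (Fequiv k) (xg k (e2 k) 0 1) = Bx k := by
      show fMap k _ = _; rw [fMap_xg]; simp [gv]
    have h11 : (Fequiv k) (xg k (e2 k) 1 1) = By k := by
      show fMap k _ = _; rw [fMap_xg]; simp [gv]
    simp [Fin.sum_univ_two, map_add, TensorProduct.map_tmul,
      AlgEquiv.toLinearMap_apply, h10, h11]
  · rw [hε 0 1]; simp
  · rw [hε 1 1]; simp

end
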